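/- There is at most one map of realisations between extremal realisations: if ρ and ρ' are extremal realisations of a family of configurations F and f, f' : ρ → ρ' are maps of realisations, then f = f'. -/

import Mathlib

universe u v w

/-- The image of a set under a partial function. -/
def pimage {α : Type u} {β : Type v} (f : α → Option β) (x : Set α) : Set β :=
  {b | ∃ a ∈ x, f a = some b}

/-- A family of configurations over the set of events `A`:
a non-empty family of subsets, whose underlying set is all of `A`,
closed under unions of finitely compatible subfamilies,
and satisfying the securing-chain condition. -/
structure ConfigFamily (A : Type u) where
  F : Set (Set A)
  nonempty : F.Nonempty
  covers : ∀ a : A, ∃ x ∈ F, a ∈ x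
  unionClosed : ∀ X ⊆ F, (∀ Y ⊆ X, Y.Finite → ∃ z ∈ F, ∀ y ∈ Y, y ⊆ z) → ⋃₀ X ∈ F
  secured : ∀ x ∈ F, ∀ e ∈ x, ∃ l : List A, l ≠ [] ∧ l.getLast? = some e ∧
    (∀ a ∈ l, a ∈ x) ∧ ∀ i, 0 < i → i ≤ l.length → {a | a ∈ l.take i} ∈ F

/-- A causal realisation of the family `C`: a partial order whose
principal lower sets are finite, together with a function to events
sending every down-closed subset to a configuration of the family. -/
structure Realisation {A : Type u} (C : ConfigFamily A) where
  carrier : Type u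
  le : carrier → carrier → Prop
  le_refl : ∀ a, le a a
  le_trans : ∀ a b c, le a b → le b c → le a c
  le_antisymm : ∀ a b, le a b → le b a → a = b
  finPast : ∀ e, {e' | le e' e}.Finite
  ρ : carrier → A
  real : ∀ x : Set carrier, (∀ a ∈ x, ∀ b, le b a → b ∈ x) → ρ '' x ∈ C.F

namespace Realisation

variable {A : Type u} {C : ConfigFamily A}

/-- Down-closed subsets of the carrier of a realisation. -/
def IsDown (r : Realisation C) (x : Set r.carrier) : Prop :=
  ∀ a ∈ x, ∀ b, r.le b a → b ∈ x

/-- The set `[a) = [a] \ {a}` of strict predecessors. -/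
def spred (r : Realisation C) (a : r.carrier) : Set r.carrier :=
  {b | r.le b a ∧ b ≠ a}

/-- The carrier has a top element. -/
def HasTop (r : Realisation C) : Prop := ∃ t, ∀ a, r.le a t

end Realisation

/-- A map of realisations: a partial surjective function between the carriers,
preserving down-closed subsets and commuting with the functions to events. -/
structure RealMap {A : Type u} {C : ConfigFamily A} (r r' : Realisation C) where
  f : r.carrier → Option r'.carrier
  surj : ∀ b, ∃ a, f a = some b
  presDown : ∀ x, r.IsDown x → r'.IsDown (pimage f x)
  commutes : ∀ a b, f a = some b → r.ρ a = r'.ρ b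

namespace RealMap

variable {A : Type u} {C : ConfigFamily A} {r r' r₀ : Realisation C}

/-- The map is total. -/
def IsTotal (m : RealMap r r') : Prop := ∀ a, ∃ b, m.f a = some b

/-- The map is an isomorphism of realisations: it has an inverse map of
realisations, given by the inverse relation. -/
def IsIso (m : RealMap r r') : Prop :=
  ∃ m' : RealMap r' r, ∀ a b, m.f a = some b ↔ m'.f b = some a

/-- `m : r → r₀` is a projection witnessed by `g`: `g` realises the carrier of
`r₀` as a subset of the carrier of `r` with the restricted order and restricted
function to events, and `m` is the inverse relation of this inclusion. -/
def IsProjectionVia (m : RealMap r r₀) (g : r₀.carrier → r.carrier) : Prop :=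
  Function.Injective g ∧ (∀ a b, r₀.le a b ↔ r.le (g a) (g b)) ∧
    (∀ a, r₀.ρ a = r.ρ (g a)) ∧ (∀ a b, m.f a = some b ↔ g b = a)

/-- `m` is a projection. -/
def IsProjection (m : RealMap r r₀) : Prop := ∃ g, m.IsProjectionVia g

end RealMap

/-- A realisation is extremal when every total map of realisations from it
is an isomorphism. -/
def Realisation.Extremal {A : Type u} {C : ConfigFamily A} (r : Realisation C) : Prop :=
  ∀ (r' : Realisation C) (m : RealMap r r'), m.IsTotal → m.IsIso

/-- A prime extremal realisation: extremal with a top element. -/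
def Realisation.PrimeExtremal {A : Type u} {C : ConfigFamily A} (r : Realisation C) : Prop :=
  r.Extremal ∧ r.HasTop

/-- Isomorphism of realisations. -/
def RealIso {A : Type u} {C : ConfigFamily A} (r r' : Realisation C) : Prop :=
  ∃ m : RealMap r r', m.IsIso

/-- `m` is the composite of `m₁` followed by `m₂` (as partial functions). -/
def CompEq {A : Type u} {C : ConfigFamily A} {r r' r'' : Realisation C}
    (m₁ : RealMap r r') (m₂ : RealMap r' r'') (m : RealMap r r'') : Prop :=
  ∀ a c, m.f a = some c ↔ ∃ b, m₁.f a = some b ∧ m₂.f b = some c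

/-!
A total map out of an extremal realisation is an isomorphism, so it is injective and monotone.
Applied to the total map from `r` into the realisation obtained by adjoining to `r'` the events
on which `f` is undefined, this shows that a map `f` out of an extremal realisation is defined
on a down-closed set, monotone and injective there; if `r'` is extremal too, the inverse of `f`
is monotone, so `f` maps the strict past of its preimage `f⁻¹ b` onto the strict past of `b`.
By well-founded induction on `b`, the preimages of `b` under `f` and `f'` then have the same
strict past and the same label. Two distinct such events cannot exist in an extremal realisation:
collapsing one onto the other would be a non-injective total map.
-/

theorem pimage_some {α : Type v} {β : Type w} (k : α → β) (x : Set α) :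
    pimage (fun a => some (k a)) x = k '' x := by
  ext b
  simp [pimage]

namespace ConfigFamily

variable {A : Type u} (C : ConfigFamily A)

theorem sUnion_mem_of_bounded {X : Set (Set A)} (hX : X ⊆ C.F) {z : Set A} (hz : z ∈ C.F)
    (hXz : ∀ y ∈ X, y ⊆ z) : ⋃₀ X ∈ C.F :=
  C.unionClosed X hX fun _ hY _ => ⟨z, hz, fun y hy => hXz y (hY hy)⟩

theorem image_mem_of_principal {β : Type v} {le : β → β → Prop} (hrefl : ∀ a, le a a)
    {ρ : β → A} {z : Set A} (hz : z ∈ C.F) (hρz : ∀ a, ρ a ∈ z)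
    (hprinc : ∀ b, ρ '' {a | le a b} ∈ C.F) {x : Set β}
    (hx : ∀ b ∈ x, ∀ a, le a b → a ∈ x) : ρ '' x ∈ C.F := by
  have hx_eq : ρ '' x = ⋃₀ ((fun b => ρ '' {a | le a b}) '' x) := by
    ext e
    constructor
    · rintro ⟨b, hb, rfl⟩
      exact ⟨_, ⟨b, hb, rfl⟩, b, hrefl b, rfl⟩
    · rintro ⟨_, ⟨b, hb, rfl⟩, a, hab, rfl⟩
      exact ⟨a, hx b hb a hab, rfl⟩
  rw [hx_eq]
  refine C.sUnion_mem_of_bounded ?_ hz ?_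
  · rintro _ ⟨b, -, rfl⟩
    exact hprinc b
  · rintro _ ⟨b, -, rfl⟩ _ ⟨a, -, rfl⟩
    exact hρz a

end ConfigFamily

namespace Realisation

variable {A : Type u} {C : ConfigFamily A} (r : Realisation C)

theorem isDown_setOf_le (c : r.carrier) : r.IsDown {a | r.le a c} :=
  fun _ ha _ hba => r.le_trans _ _ _ hba ha

theorem range_mem : Set.range r.ρ ∈ C.F := by
  rw [← Set.image_univ]
  exact r.real _ fun _ _ _ _ => trivial

theorem wellFounded_lt : WellFounded fun a b => r.le a b ∧ a ≠ b := by
  refine Subrelation.wf (fun {_ b} ⟨hab, hne⟩ => ?_) (measure fun b => {a | r.le a b}.ncard).wf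
  refine Set.ncard_lt_ncard ⟨fun p hp => r.le_trans _ _ _ hp hab, fun h => ?_⟩ (r.finPast b)
  exact hne (r.le_antisymm _ _ hab (h (r.le_refl b)))

end Realisation

namespace RealMap

variable {A : Type u} {C : ConfigFamily A} {r r' : Realisation C}

def ofFun (k : r.carrier → r'.carrier) (hk : Function.Surjective k)
    (hdown : ∀ x, r.IsDown x → r'.IsDown (k '' x)) (hρ : ∀ a, r'.ρ (k a) = r.ρ a) :
    RealMap r r' where
  f a := some (k a)
  surj b := (hk b).imp fun _ h => congrArg some h
  presDown x hx := by
    rw [pimage_some]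
    exact hdown x hx
  commutes a b h := by rw [← Option.some_inj.1 h, hρ]

end RealMap

namespace Realisation.Extremal

variable {A : Type u} {C : ConfigFamily A} {r r' : Realisation C}

theorem exists_inverse_of_total (hr : r.Extremal) (m : RealMap r r') {k : r.carrier → r'.carrier}
    (hk : ∀ a, m.f a = some (k a)) :
    ∃ m' : RealMap r' r, ∀ a b, m'.f b = some a ↔ k a = b := by
  obtain ⟨m', hm'⟩ := hr r' m fun a => ⟨k a, hk a⟩
  exact ⟨m', fun a b => by rw [← hm', hk, Option.some_inj]⟩

theorem injective_of_total (hr : r.Extremal) (m : RealMap r r') {k : r.carrier → r'.carrier}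
    (hk : ∀ a, m.f a = some (k a)) : Function.Injective k := by
  obtain ⟨m', hm'⟩ := hr.exists_inverse_of_total m hk
  intro a₁ a₂ h
  have h₁ := (hm' a₁ (k a₁)).2 rfl
  rw [h, (hm' a₂ (k a₂)).2 rfl] at h₁
  exact (Option.some_inj.1 h₁).symm

theorem le_of_total (hr : r.Extremal) (m : RealMap r r') {k : r.carrier → r'.carrier}
    (hk : ∀ a, m.f a = some (k a)) {a c : r.carrier} (h : r.le a c) : r'.le (k a) (k c) := by
  obtain ⟨m', hm'⟩ := hr.exists_inverse_of_total m hk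
  obtain ⟨b, hb, hba⟩ :=
    m'.presDown _ (r'.isDown_setOf_le (k c)) c ⟨k c, r'.le_refl _, (hm' c _).2 rfl⟩ a h
  rwa [(hm' a b).1 hba]

theorem le_of_suborder (hr : r.Extremal) {le' : r.carrier → r.carrier → Prop}
    (hrefl : ∀ a, le' a a) (htrans : ∀ a b c, le' a b → le' b c → le' a c)
    (hle' : ∀ a b, le' a b → r.le a b)
    (hprinc : ∀ b, r.ρ '' {a | le' a b} ∈ C.F) {a b : r.carrier} (h : r.le a b) :
    le' a b := by
  let r₂ : Realisation C :=
    { carrier := r.carrier, le := le', le_refl := hrefl, le_trans := htrans,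
      le_antisymm := fun a b h₁ h₂ => r.le_antisymm a b (hle' _ _ h₁) (hle' _ _ h₂),
      finPast := fun b => (r.finPast b).subset fun a => hle' a b,
      ρ := r.ρ,
      real := fun _ => C.image_mem_of_principal hrefl r.range_mem Set.mem_range_self hprinc }
  have hdown : ∀ x, r.IsDown x → r₂.IsDown (id '' x) := fun x hx => by
    rw [Set.image_id]
    exact fun a ha b hb => hx a ha b (hle' b a hb)
  exact hr.le_of_total (RealMap.ofFun (r' := r₂) id Function.surjective_id hdown fun _ => rfl)
    (fun _ => rfl) h

end Realisation.Extremal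

namespace RealMap

variable {A : Type u} {C : ConfigFamily A} {r r' : Realisation C} (m : RealMap r r')

/-- The order of `r'` extended by the events of `r` on which `m` is undefined, each placed above
the image of its past. -/
def adjoinLe : r'.carrier ⊕ {a // m.f a = none} → r'.carrier ⊕ {a // m.f a = none} → Prop
  | .inl b₁, .inl b₂ => r'.le b₁ b₂
  | .inl b, .inr a => b ∈ pimage m.f {p | r.le p a.1}
  | .inr _, .inl _ => False
  | .inr a₁, .inr a₂ => r.le a₁.1 a₂.1

theorem adjoinLe_refl : ∀ z, m.adjoinLe z z
  | .inl b => r'.le_refl b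
  | .inr a => r.le_refl a.1

theorem adjoinLe_trans : ∀ x y z, m.adjoinLe x y → m.adjoinLe y z → m.adjoinLe x z
  | .inl _, .inl _, .inl _, h₁, h₂ => r'.le_trans _ _ _ h₁ h₂
  | .inl _, .inl b₂, .inr a, h₁, h₂ => m.presDown _ (r.isDown_setOf_le a.1) b₂ h₂ _ h₁
  | .inl _, .inr _, .inr _, ⟨p, hp, hfp⟩, h₂ => ⟨p, r.le_trans _ _ _ hp h₂, hfp⟩
  | .inr _, .inr _, .inr _, h₁, h₂ => r.le_trans _ _ _ h₁ h₂
  | .inr _, .inl _, _, h₁, _ => h₁.elim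
  | _, .inr _, .inl _, _, h₂ => h₂.elim

theorem adjoinLe_antisymm : ∀ x y, m.adjoinLe x y → m.adjoinLe y x → x = y
  | .inl _, .inl _, h₁, h₂ => congrArg Sum.inl (r'.le_antisymm _ _ h₁ h₂)
  | .inr _, .inr _, h₁, h₂ => congrArg Sum.inr (Subtype.ext (r.le_antisymm _ _ h₁ h₂))
  | .inr _, .inl _, h₁, _ => h₁.elim
  | .inl _, .inr _, _, h₂ => h₂.elim

def adjoinFun (p : r.carrier) : r'.carrier ⊕ {a // m.f a = none} :=
  match h : m.f p with
  | some b => .inl b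
  | none => .inr ⟨p, h⟩

variable {m}

theorem adjoinFun_of_eq_some {p : r.carrier} {b : r'.carrier} (h : m.f p = some b) :
    m.adjoinFun p = .inl b := by
  unfold adjoinFun
  split <;> simp_all

theorem adjoinFun_of_eq_none {p : r.carrier} (h : m.f p = none) :
    m.adjoinFun p = .inr ⟨p, h⟩ := by
  unfold adjoinFun
  split <;> simp_all

variable (m)

theorem adjoinFun_surjective : Function.Surjective m.adjoinFun
  | .inl b => (m.surj b).imp fun _ => adjoinFun_of_eq_some
  | .inr a => ⟨a.1, adjoinFun_of_eq_none a.2⟩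

theorem setOf_adjoinLe_inl (b : r'.carrier) :
    {z | m.adjoinLe z (.inl b)} = Sum.inl '' {q | r'.le q b} := by
  ext (q | a) <;> simp [adjoinLe]

theorem setOf_adjoinLe_inr (a : {a // m.f a = none}) :
    {z | m.adjoinLe z (.inr a)} = m.adjoinFun '' {p | r.le p a.1} := by
  ext z
  constructor
  · rcases z with q | a'
    · rintro ⟨p, hp, hfp⟩
      exact ⟨p, hp, adjoinFun_of_eq_some hfp⟩
    · exact fun h => ⟨a'.1, h, adjoinFun_of_eq_none a'.2⟩
  · rintro ⟨p, hp, rfl⟩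
    cases hfp : m.f p with
    | some q => rw [adjoinFun_of_eq_some hfp]; exact ⟨p, hp, hfp⟩
    | none => rw [adjoinFun_of_eq_none hfp]; exact hp

theorem exists_le_of_adjoinLe_adjoinFun {z : r'.carrier ⊕ {a // m.f a = none}}
    {w : r.carrier} (h : m.adjoinLe z (m.adjoinFun w)) :
    ∃ p, r.le p w ∧ m.adjoinFun p = z := by
  cases hfw : m.f w with
  | some b =>
    rw [adjoinFun_of_eq_some hfw] at h
    rcases z with q | _
    · obtain ⟨p, hp, hfp⟩ := m.presDown _ (r.isDown_setOf_le w) b ⟨w, r.le_refl w, hfw⟩ q h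
      exact ⟨p, hp, adjoinFun_of_eq_some hfp⟩
    · exact h.elim
  | none =>
    have hz : z ∈ {z | m.adjoinLe z (.inr ⟨w, hfw⟩)} := by rwa [adjoinFun_of_eq_none hfw] at h
    rwa [setOf_adjoinLe_inr] at hz

def adjoinLabel : r'.carrier ⊕ {a // m.f a = none} → A :=
  Sum.elim r'.ρ fun a => r.ρ a.1

theorem adjoinLabel_adjoinFun (p : r.carrier) : m.adjoinLabel (m.adjoinFun p) = r.ρ p := by
  cases hfp : m.f p with
  | some b => rw [adjoinFun_of_eq_some hfp]; exact (m.commutes p b hfp).symm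
  | none => rw [adjoinFun_of_eq_none hfp]; rfl

def adjoin : Realisation C where
  carrier := r'.carrier ⊕ {a // m.f a = none}
  le := m.adjoinLe
  le_refl := m.adjoinLe_refl
  le_trans := m.adjoinLe_trans
  le_antisymm := m.adjoinLe_antisymm
  finPast
    | .inl b => by rw [setOf_adjoinLe_inl]; exact (r'.finPast b).image _
    | .inr a => by rw [setOf_adjoinLe_inr]; exact (r.finPast a.1).image _
  ρ := m.adjoinLabel
  real _ := by
    refine C.image_mem_of_principal m.adjoinLe_refl r.range_mem (fun z => ?_) ?_
    · obtain ⟨p, rfl⟩ := m.adjoinFun_surjective z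
      exact ⟨p, (m.adjoinLabel_adjoinFun p).symm⟩
    · rintro (b | a)
      · rw [setOf_adjoinLe_inl, Set.image_image]
        exact r'.real _ (r'.isDown_setOf_le b)
      · rw [setOf_adjoinLe_inr, Set.image_image]
        simp only [adjoinLabel_adjoinFun]
        exact r.real _ (r.isDown_setOf_le a.1)

def toAdjoin : RealMap r m.adjoin :=
  ofFun m.adjoinFun m.adjoinFun_surjective
    (fun x hx => by
      rintro _ ⟨w, hw, rfl⟩ z hz
      obtain ⟨p, hp, rfl⟩ := m.exists_le_of_adjoinLe_adjoinFun hz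
      exact ⟨p, hx w hw p hp, rfl⟩)
    m.adjoinLabel_adjoinFun

variable {m}

theorem exists_f_eq_some_of_le (hr : r.Extremal) {a c : r.carrier} {b : r'.carrier}
    (hc : m.f c = some b) (h : r.le a c) : ∃ b', m.f a = some b' := by
  have hle := hr.le_of_total m.toAdjoin (fun _ => rfl) h
  cases ha : m.f a with
  | some b' => exact ⟨b', rfl⟩
  | none =>
    rw [adjoinFun_of_eq_none ha, adjoinFun_of_eq_some hc] at hle
    exact hle.elim

theorem le_of_le (hr : r.Extremal) {a c : r.carrier} {b b' : r'.carrier} (h : r.le a c)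
    (ha : m.f a = some b) (hc : m.f c = some b') : r'.le b b' := by
  have hle := hr.le_of_total m.toAdjoin (fun _ => rfl) h
  rwa [adjoinFun_of_eq_some ha, adjoinFun_of_eq_some hc] at hle

theorem eq_of_f_eq_some (hr : r.Extremal) {a₁ a₂ : r.carrier} {b : r'.carrier}
    (h₁ : m.f a₁ = some b) (h₂ : m.f a₂ = some b) : a₁ = a₂ :=
  hr.injective_of_total m.toAdjoin (fun _ => rfl)
    (by rw [adjoinFun_of_eq_some h₁, adjoinFun_of_eq_some h₂])

variable (m)

noncomputable def inv (b : r'.carrier) : r.carrier := (m.surj b).choose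

theorem f_inv (b : r'.carrier) : m.f (m.inv b) = some b := (m.surj b).choose_spec

theorem ρ_inv (b : r'.carrier) : r.ρ (m.inv b) = r'.ρ b := m.commutes _ _ (m.f_inv b)

variable {m}

theorem f_eq_some_iff (hr : r.Extremal) {a : r.carrier} {b : r'.carrier} :
    m.f a = some b ↔ a = m.inv b :=
  ⟨fun h => eq_of_f_eq_some hr h (m.f_inv b), fun h => h ▸ m.f_inv b⟩

theorem inv_le_inv (hr : r.Extremal) (hr' : r'.Extremal) {b₁ b₂ : r'.carrier}
    (h : r'.le b₁ b₂) : r.le (m.inv b₁) (m.inv b₂) := by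
  have hprinc : ∀ b, r'.ρ '' {q | r'.le q b ∧ r.le (m.inv q) (m.inv b)} ∈ C.F := by
    intro b
    convert r.real _ (r.isDown_setOf_le (m.inv b)) using 1
    ext e
    constructor
    · rintro ⟨q, ⟨-, hq⟩, rfl⟩
      exact ⟨m.inv q, hq, m.ρ_inv q⟩
    · rintro ⟨p, hp, rfl⟩
      obtain ⟨q, hq⟩ := exists_f_eq_some_of_le hr (m.f_inv b) hp
      have hpq : p = m.inv q := (f_eq_some_iff hr).1 hq
      exact ⟨q, ⟨le_of_le hr hp hq (m.f_inv b), hpq ▸ hp⟩, (m.commutes p q hq).symm⟩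
  refine (hr'.le_of_suborder
    (le' := fun q₁ q₂ => r'.le q₁ q₂ ∧ r.le (m.inv q₁) (m.inv q₂))
    (fun q => ⟨r'.le_refl q, r.le_refl _⟩)
    (fun _ _ _ h₁ h₂ => ⟨r'.le_trans _ _ _ h₁.1 h₂.1, r.le_trans _ _ _ h₁.2 h₂.2⟩)
    (fun _ _ h => h.1) hprinc h).2

theorem spred_inv (hr : r.Extremal) (hr' : r'.Extremal) (b : r'.carrier) :
    r.spred (m.inv b) = m.inv '' r'.spred b := by
  ext x
  constructor
  · rintro ⟨hx, hne⟩
    obtain ⟨b₁, hb₁⟩ := exists_f_eq_some_of_le hr (m.f_inv b) hx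
    obtain rfl := (f_eq_some_iff hr).1 hb₁
    refine ⟨b₁, ⟨le_of_le hr hx hb₁ (m.f_inv b), ?_⟩, rfl⟩
    rintro rfl
    exact hne rfl
  · rintro ⟨b₁, ⟨hb₁, hne⟩, rfl⟩
    refine ⟨inv_le_inv hr hr' hb₁, fun h => hne ?_⟩
    simpa [m.f_inv] using congrArg m.f h

end RealMap

namespace Realisation

variable {A : Type u} {C : ConfigFamily A} (r : Realisation C)

/-- Restricted to the events other than `a`, this is the order of the realisation in which `a`
is collapsed onto `c`: everything above `a` is put above the past of `c`. -/
def mergeLe (a c p q : r.carrier) : Prop := r.le p q ∨ (r.le p c ∧ r.le a q)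

variable {r} {a c : r.carrier}

theorem isDown_setOf_mergeLe (y : r.carrier) : r.IsDown {p | r.mergeLe a c p y} := by
  rintro p (hp | ⟨hp, hay⟩) q hqp
  · exact .inl (r.le_trans _ _ _ hqp hp)
  · exact .inr ⟨r.le_trans _ _ _ hqp hp, hay⟩

theorem ne_of_not_le (hac : ¬ r.le a c) : c ≠ a := by
  rintro rfl
  exact hac (r.le_refl c)

theorem mergeLe_trans (hac : ¬ r.le a c) (p q s : r.carrier) :
    r.mergeLe a c p q → r.mergeLe a c q s → r.mergeLe a c p s := by
  rintro (h₁ | ⟨h₁, h₁'⟩) (h₂ | ⟨h₂, h₂'⟩)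
  · exact .inl (r.le_trans _ _ _ h₁ h₂)
  · exact .inr ⟨r.le_trans _ _ _ h₁ h₂, h₂'⟩
  · exact .inr ⟨h₁, r.le_trans _ _ _ h₁' h₂⟩
  · exact absurd (r.le_trans _ _ _ h₁' h₂) hac

theorem mergeLe_antisymm (hac : ¬ r.le a c) (p q : r.carrier) :
    r.mergeLe a c p q → r.mergeLe a c q p → p = q := by
  rintro (h₁ | ⟨h₁, h₁'⟩) (h₂ | ⟨h₂, h₂'⟩)
  · exact r.le_antisymm _ _ h₁ h₂
  · exact absurd (r.le_trans _ _ _ (r.le_trans _ _ _ h₂' h₁) h₂) hac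
  · exact absurd (r.le_trans _ _ _ (r.le_trans _ _ _ h₁' h₂) h₁) hac
  · exact absurd (r.le_trans _ _ _ h₂' h₁) hac

def merge (hac : ¬ r.le a c) (hρ : r.ρ a = r.ρ c) : Realisation C where
  carrier := {p // p ≠ a}
  le p q := r.mergeLe a c p.1 q.1
  le_refl p := .inl (r.le_refl p.1)
  le_trans p q s := mergeLe_trans hac p.1 q.1 s.1
  le_antisymm p q h₁ h₂ := Subtype.ext (mergeLe_antisymm hac p.1 q.1 h₁ h₂)
  finPast y := by
    refine ((r.finPast y).union (r.finPast c)).preimage Subtype.val_injective.injOn |>.subset ?_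
    rintro z (hz | hz)
    exacts [.inl hz, .inr hz.1]
  ρ p := r.ρ p.1
  real _ := by
    refine C.image_mem_of_principal (fun p : {p // p ≠ a} => Or.inl (r.le_refl p.1))
      r.range_mem (fun p => ⟨p.1, rfl⟩) fun y => ?_
    convert r.real _ (isDown_setOf_mergeLe (a := a) (c := c) y.1) using 1
    ext e
    constructor
    · rintro ⟨p, hp, rfl⟩
      exact ⟨p.1, hp, rfl⟩
    · rintro ⟨p, hp, rfl⟩
      by_cases hpa : p = a
      · subst hpa
        have hay : r.le p y := hp.resolve_right fun h => hac h.1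
        exact ⟨⟨c, ne_of_not_le hac⟩, .inr ⟨r.le_refl c, hay⟩, hρ.symm⟩
      · exact ⟨⟨p, hpa⟩, hp, rfl⟩

open Classical in
noncomputable def mergeFun (hac : ¬ r.le a c) (p : r.carrier) : {p // p ≠ a} :=
  if h : p = a then ⟨c, ne_of_not_le hac⟩ else ⟨p, h⟩

theorem mergeFun_self (hac : ¬ r.le a c) : mergeFun hac a = ⟨c, ne_of_not_le hac⟩ :=
  dif_pos rfl

theorem mergeFun_of_ne (hac : ¬ r.le a c) {p : r.carrier} (h : p ≠ a) :
    mergeFun hac p = ⟨p, h⟩ :=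
  dif_neg h

theorem mergeLe_of_mergeLe_mergeFun (hac : ¬ r.le a c) {z w : r.carrier}
    (h : r.mergeLe a c z (mergeFun hac w)) : r.mergeLe a c z w := by
  by_cases hwa : w = a
  · subst hwa
    rw [mergeFun_self] at h
    exact .inr ⟨h.elim id And.left, r.le_refl w⟩
  · rwa [mergeFun_of_ne hac hwa] at h

noncomputable def mergeMap (hac : ¬ r.le a c) (hρ : r.ρ a = r.ρ c)
    (hspred : r.spred c ⊆ r.spred a) : RealMap r (r.merge hac hρ) :=
  RealMap.ofFun (mergeFun hac) (fun p => ⟨p.1, mergeFun_of_ne hac p.2⟩)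
    (fun x hx => by
      rintro _ ⟨w, hw, rfl⟩ z hz
      rcases mergeLe_of_mergeLe_mergeFun hac hz with hzw | ⟨hzc, haw⟩
      · exact ⟨z.1, hx w hw z.1 hzw, mergeFun_of_ne hac z.2⟩
      · by_cases hz : z.1 = c
        · exact ⟨a, hx w hw a haw, (mergeFun_self hac).trans (Subtype.ext hz.symm)⟩
        · have hza : r.le z.1 a := (hspred ⟨hzc, hz⟩).1
          exact ⟨z.1, hx a (hx w hw a haw) z.1 hza, mergeFun_of_ne hac z.2⟩)
    (fun p => by
      by_cases hpa : p = a
      · subst hpa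
        rw [mergeFun_self]
        exact hρ.symm
      · rw [mergeFun_of_ne hac hpa]
        rfl)

theorem Extremal.eq_of_ρ_eq_of_spred_subset (hr : r.Extremal) (hρ : r.ρ a = r.ρ c)
    (hspred : r.spred c ⊆ r.spred a) : a = c := by
  by_contra hne
  have hac : ¬ r.le a c := fun h => (hspred ⟨h, hne⟩).2 rfl
  refine hne (hr.injective_of_total (mergeMap hac hρ hspred) (fun _ => rfl) ?_)
  rw [mergeFun_self, mergeFun_of_ne hac (Ne.symm hne)]

end Realisation

theorem RealMap.inv_eq_inv {A : Type u} {C : ConfigFamily A} {r r' : Realisation C}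
    (hr : r.Extremal) (hr' : r'.Extremal) (m m' : RealMap r r') (b : r'.carrier) :
    m.inv b = m'.inv b := by
  induction b using r'.wellFounded_lt.induction with
  | _ b ih =>
    refine hr.eq_of_ρ_eq_of_spred_subset (by rw [m.ρ_inv, m'.ρ_inv]) ?_
    rw [m.spred_inv hr hr', m'.spred_inv hr hr']
    exact (Set.image_congr ih).ge

/-- There is at most one map of realisations between extremal realisations. -/
theorem stmt8 {A : Type u} (C : ConfigFamily A) (r r' : Realisation C)
    (hr : r.Extremal) (hr' : r'.Extremal) (f f' : RealMap r r') :
    f.f = f'.f := by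
  funext a
  refine Option.ext fun b => ?_
  rw [RealMap.f_eq_some_iff hr, RealMap.f_eq_some_iff hr, f.inv_eq_inv hr hr' f']
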